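/- arXiv:2604.13198 — 7 statements merged into one kernel-verified Lean document; each statement's English description precedes it below -/
import Mathlib

section
/- Let k ≥ 1 and l ≥ 1 be integers. In ℝ³ with the standard inner product, let 𝒞 be the set of all linear combinations with nonnegative real coefficients of the four vectors (1,0,0), (1,k,0), (1,l,1), (1,0,1). Then the dual cone {y ∈ ℝ³ : ⟨y, x⟩ ≥ 0 for all x ∈ 𝒞} equals the set of all linear combinations with nonnegative real coefficients of the four vectors u = (1,0,−1), v = (0,0,1), w = (0,1,0), z = (k,−1,l−k). -/
/-!
A point lies in the dual of a finitely generated cone iff it pairs nonnegatively with each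
generator, so for `y = (p, q, r)` the dual of `𝒞` is cut out by the four facet inequalities
`0 ≤ p`, `0 ≤ p + k q`, `0 ≤ p + l q + r`, `0 ≤ p + r`. The vectors `u, v, w, z` satisfy them,
and conversely the region they cut out is the union of the simplicial cones spanned by
`u, v, w` (where `0 ≤ q`) and by `u, v, z` (where `q ≤ 0`).
-/

section Cone

variable {𝕜 E : Type*} [CommSemiring 𝕜] [PartialOrder 𝕜] [IsOrderedRing 𝕜]
  [AddCommMonoid E] [Module 𝕜 E]

def cone4 (g₁ g₂ g₃ g₄ : E) : Set E :=
  {x | ∃ a b c d : 𝕜, 0 ≤ a ∧ 0 ≤ b ∧ 0 ≤ c ∧ 0 ≤ d ∧ x = a • g₁ + b • g₂ + c • g₃ + d • g₄}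

theorem forall_mem_cone4_nonneg_iff (f : E →ₗ[𝕜] 𝕜) (g₁ g₂ g₃ g₄ : E) :
    (∀ x ∈ cone4 (𝕜 := 𝕜) g₁ g₂ g₃ g₄, 0 ≤ f x) ↔
      0 ≤ f g₁ ∧ 0 ≤ f g₂ ∧ 0 ≤ f g₃ ∧ 0 ≤ f g₄ := by
  constructor
  · intro h
    refine ⟨h _ ⟨1, 0, 0, 0, ?_⟩, h _ ⟨0, 1, 0, 0, ?_⟩, h _ ⟨0, 0, 1, 0, ?_⟩,
      h _ ⟨0, 0, 0, 1, ?_⟩⟩ <;> simp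
  · rintro ⟨h₁, h₂, h₃, h₄⟩ x ⟨a, b, c, d, ha, hb, hc, hd, rfl⟩
    simp only [map_add, map_smul, smul_eq_mul]
    positivity

end Cone

def dot3 : (ℝ × ℝ × ℝ) →ₗ[ℝ] (ℝ × ℝ × ℝ) →ₗ[ℝ] ℝ :=
  LinearMap.mk₂ ℝ (fun y x => y.1 * x.1 + y.2.1 * x.2.1 + y.2.2 * x.2.2)
    (fun _ _ _ => by simp only [Prod.fst_add, Prod.snd_add]; ring)
    (fun _ _ _ => by simp only [Prod.smul_fst, Prod.smul_snd, smul_eq_mul]; ring)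
    (fun _ _ _ => by simp only [Prod.fst_add, Prod.snd_add]; ring)
    (fun _ _ _ => by simp only [Prod.smul_fst, Prod.smul_snd, smul_eq_mul]; ring)

theorem dot3_apply (y x : ℝ × ℝ × ℝ) :
    dot3 y x = y.1 * x.1 + y.2.1 * x.2.1 + y.2.2 * x.2.2 := rfl

theorem dot3_comm (y x : ℝ × ℝ × ℝ) : dot3 y x = dot3 x y := by
  simp only [dot3_apply]; ring

theorem mem_cone4_of_facet_ineqs (k l : ℝ) {p q r : ℝ} (h₁ : 0 ≤ p) (h₂ : 0 ≤ p + q * k)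
    (h₃ : 0 ≤ p + q * l + r) (h₄ : 0 ≤ p + r) :
    (p, q, r) ∈ cone4 (𝕜 := ℝ) (1, 0, -1) (0, 0, 1) (0, 1, 0) (k, -1, l - k) := by
  rcases le_total 0 q with hq | hq
  · refine ⟨p, p + r, q, 0, h₁, h₄, hq, le_rfl, ?_⟩
    simp only [Prod.smul_mk, smul_eq_mul, Prod.mk_add_mk, Prod.mk.injEq]
    refine ⟨?_, ?_, ?_⟩ <;> ring
  · refine ⟨p + q * k, p + q * l + r, 0, -q, h₂, h₃, le_rfl, neg_nonneg.mpr hq, ?_⟩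
    simp only [Prod.smul_mk, smul_eq_mul, Prod.mk_add_mk, Prod.mk.injEq]
    refine ⟨?_, ?_, ?_⟩ <;> ring

theorem stmt3_general (k l : ℕ) :
    {y : ℝ × ℝ × ℝ |
        ∀ x ∈ {x : ℝ × ℝ × ℝ | ∃ a b c d : ℝ, 0 ≤ a ∧ 0 ≤ b ∧ 0 ≤ c ∧ 0 ≤ d ∧
            x = a • ((1 : ℝ), (0 : ℝ), (0 : ℝ)) + b • ((1 : ℝ), (k : ℝ), (0 : ℝ)) +
              c • ((1 : ℝ), (l : ℝ), (1 : ℝ)) + d • ((1 : ℝ), (0 : ℝ), (1 : ℝ))},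
          0 ≤ y.1 * x.1 + y.2.1 * x.2.1 + y.2.2 * x.2.2} =
      {y : ℝ × ℝ × ℝ | ∃ a b c d : ℝ, 0 ≤ a ∧ 0 ≤ b ∧ 0 ≤ c ∧ 0 ≤ d ∧
          y = a • ((1 : ℝ), (0 : ℝ), (-1 : ℝ)) + b • ((0 : ℝ), (0 : ℝ), (1 : ℝ)) +
            c • ((0 : ℝ), (1 : ℝ), (0 : ℝ)) + d • ((k : ℝ), (-1 : ℝ), (l : ℝ) - (k : ℝ))} := by
  ext ⟨p, q, r⟩
  change (∀ x ∈ cone4 _ _ _ _, 0 ≤ dot3 (p, q, r) x) ↔ (p, q, r) ∈ cone4 _ _ _ _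
  rw [forall_mem_cone4_nonneg_iff]
  constructor
  · simp only [dot3_apply, mul_one, mul_zero, add_zero]
    rintro ⟨h₁, h₂, h₃, h₄⟩
    exact mem_cone4_of_facet_ineqs k l h₁ h₂ h₃ h₄
  · intro hy
    simp only [dot3_comm (p, q, r)]
    -- `dot3 g` is a linear functional, nonnegative on `u, v, w, z` for each generator `g` of `𝒞`
    refine ⟨?_, ?_, ?_, ?_⟩ <;>
      refine (forall_mem_cone4_nonneg_iff _ _ _ _ _).mpr ?_ _ hy <;>
      refine ⟨?_, ?_, ?_, ?_⟩ <;> dsimp only [dot3_apply] <;>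
      linarith [(k.cast_nonneg : (0 : ℝ) ≤ k), (l.cast_nonneg : (0 : ℝ) ≤ l)]

/-- The dual of the cone `𝒞 ⊂ ℝ³` generated by `(1,0,0), (1,k,0), (1,l,1), (1,0,1)`
is the cone generated by `u = (1,0,−1)`, `v = (0,0,1)`, `w = (0,1,0)`,
`z = (k,−1,l−k)`. -/
theorem stmt3 (k l : ℕ) (hk : 1 ≤ k) (hl : 1 ≤ l) :
    {y : ℝ × ℝ × ℝ |
        ∀ x ∈ {x : ℝ × ℝ × ℝ | ∃ a b c d : ℝ, 0 ≤ a ∧ 0 ≤ b ∧ 0 ≤ c ∧ 0 ≤ d ∧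
            x = a • ((1 : ℝ), (0 : ℝ), (0 : ℝ)) + b • ((1 : ℝ), (k : ℝ), (0 : ℝ)) +
              c • ((1 : ℝ), (l : ℝ), (1 : ℝ)) + d • ((1 : ℝ), (0 : ℝ), (1 : ℝ))},
          0 ≤ y.1 * x.1 + y.2.1 * x.2.1 + y.2.2 * x.2.2} =
      {y : ℝ × ℝ × ℝ | ∃ a b c d : ℝ, 0 ≤ a ∧ 0 ≤ b ∧ 0 ≤ c ∧ 0 ≤ d ∧
          y = a • ((1 : ℝ), (0 : ℝ), (-1 : ℝ)) + b • ((0 : ℝ), (0 : ℝ), (1 : ℝ)) +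
            c • ((0 : ℝ), (1 : ℝ), (0 : ℝ)) + d • ((k : ℝ), (-1 : ℝ), (l : ℝ) - (k : ℝ))} :=
  stmt3_general k l
end

section
/- Let k ≥ 2 and 1 ≤ m ≤ 2k − 1 be integers. Then the affine hypersurface {(z₁,z₂,z₃,z₄) ∈ ℂ⁴ : z₁ z₂^k + z₃² + z₄² = z₁^m + 1} is smooth: at every point of this hypersurface, at least one of the four partial derivatives z₂^k − m z₁^{m−1}, k z₁ z₂^{k−1}, 2z₃, 2z₄ of the defining polynomial z₁ z₂^k + z₃² + z₄² − z₁^m − 1 is nonzero. -/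
/-!
Away from its constant term the defining polynomial `F` is quasi-homogeneous, with weights
`1/m, (1 - 1/m)/k, 1/2, 1/2`, so the Euler vector field gives an identity
`2mk·F − 2k·z₁∂₁F − 2(m−1)·z₂∂₂F − mk·(z₃∂₃F + z₄∂₄F) = −2mk`.
At a singular point of `{F = 0}` the left side vanishes, while `2mk ≠ 0` in characteristic zero.
-/

theorem quasihomogeneous_euler_relation {R : Type*} [CommRing R] {k m : ℕ} (hk : 1 ≤ k) (hm : 1 ≤ m)
    (z₁ z₂ z₃ z₄ : R) :
    2 * m * k * (z₁ * z₂ ^ k + z₃ ^ 2 + z₄ ^ 2 - z₁ ^ m - 1)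
      - 2 * k * z₁ * (z₂ ^ k - m * z₁ ^ (m - 1))
      - 2 * (m - 1 : R) * z₂ * (k * z₁ * z₂ ^ (k - 1))
      - m * k * (z₃ * (2 * z₃) + z₄ * (2 * z₄)) = -2 * m * k := by
  obtain ⟨k, rfl⟩ := Nat.exists_eq_add_of_le' hk
  obtain ⟨m, rfl⟩ := Nat.exists_eq_add_of_le' hm
  simp only [Nat.add_sub_cancel, Nat.cast_add, Nat.cast_one]
  ring

theorem no_singular_point {K : Type*} [Field K] [CharZero K] {k m : ℕ}
    (hk : 1 ≤ k) (hm : 1 ≤ m) {z₁ z₂ z₃ z₄ : K}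
    (hF : z₁ * z₂ ^ k + z₃ ^ 2 + z₄ ^ 2 = z₁ ^ m + 1)
    (h₁ : z₂ ^ k - m * z₁ ^ (m - 1) = 0) (h₂ : k * z₁ * z₂ ^ (k - 1) = 0)
    (h₃ : 2 * z₃ = 0) (h₄ : 2 * z₄ = 0) : False := by
  have hmk : (2 * m * k : K) = 0 := by
    linear_combination quasihomogeneous_euler_relation hk hm z₁ z₂ z₃ z₄ - 2 * m * k * hF
      + 2 * k * z₁ * h₁ + 2 * (m - 1 : K) * z₂ * h₂ + m * k * z₃ * h₃ + m * k * z₄ * h₄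
  simp [Nat.one_le_iff_ne_zero.mp hk, Nat.one_le_iff_ne_zero.mp hm] at hmk

theorem stmt7_general (k m : ℕ) (hk : 2 ≤ k) (hm1 : 1 ≤ m) :
    ∀ z₁ z₂ z₃ z₄ : ℂ, z₁ * z₂ ^ k + z₃ ^ 2 + z₄ ^ 2 = z₁ ^ m + 1 →
      (z₂ ^ k - (m : ℂ) * z₁ ^ (m - 1) ≠ 0 ∨ (k : ℂ) * z₁ * z₂ ^ (k - 1) ≠ 0 ∨
        2 * z₃ ≠ 0 ∨ 2 * z₄ ≠ 0) := by
  intro z₁ z₂ z₃ z₄ hF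
  by_contra! ⟨h₁, h₂, h₃, h₄⟩
  exact no_singular_point (by omega) hm1 hF h₁ h₂ h₃ h₄

/-- For `k ≥ 2` and `1 ≤ m ≤ 2k − 1`, the hypersurface
`{z₁ z₂^k + z₃² + z₄² = z₁^m + 1}` is smooth: at each of its points at least one of the
partial derivatives `z₂^k − m z₁^{m−1}`, `k z₁ z₂^{k−1}`, `2z₃`, `2z₄` is nonzero. -/
theorem stmt7 (k m : ℕ) (hk : 2 ≤ k) (hm1 : 1 ≤ m) (hm2 : m ≤ 2 * k - 1) :
    ∀ z₁ z₂ z₃ z₄ : ℂ, z₁ * z₂ ^ k + z₃ ^ 2 + z₄ ^ 2 = z₁ ^ m + 1 →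
      (z₂ ^ k - (m : ℂ) * z₁ ^ (m - 1) ≠ 0 ∨ (k : ℂ) * z₁ * z₂ ^ (k - 1) ≠ 0 ∨
        2 * z₃ ≠ 0 ∨ 2 * z₄ ≠ 0) :=
  stmt7_general k m hk hm1
end

section
/- Let n ≥ 2 be an integer. The affine hypersurface {(z₁,z₂,z₃,z₄) ∈ ℂ⁴ : z₁z₂z₃ − z₄ⁿ = z₁² + z₂² + z₃² + 1} is smooth: at every point of it, at least one of the four partial derivatives z₂z₃ − 2z₁, z₁z₃ − 2z₂, z₁z₂ − 2z₃, n z₄^{n−1} of the defining polynomial z₁z₂z₃ − z₄ⁿ − z₁² − z₂² − z₃² − 1 is nonzero. -/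
/-! At a singular point of `z₁z₂z₃ = z₁² + z₂² + z₃² + c` the three partials give
`z₁z₂z₃ = 2zᵢ²` for each `i`, so every `zᵢ² = -c` and `z₁z₂z₃ = -2c`; squaring the latter gives
`4c² = -c³`. For our hypersurface the partial in `z₄` forces `z₄ = 0`, hence `c = 1`, and
`4 = -1` is impossible in `ℂ`. -/

theorem sq_mul_add_four_eq_zero_of_singular_cubic {K : Type*} [Field K] (h2 : (2 : K) ≠ 0)
    {c z₁ z₂ z₃ : K} (heq : z₁ * z₂ * z₃ = z₁ ^ 2 + z₂ ^ 2 + z₃ ^ 2 + c)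
    (h₁ : z₂ * z₃ - 2 * z₁ = 0) (h₂ : z₁ * z₃ - 2 * z₂ = 0) (h₃ : z₁ * z₂ - 2 * z₃ = 0) :
    c ^ 2 * (c + 4) = 0 := by
  have t₁ : z₁ * z₂ * z₃ = 2 * z₁ ^ 2 := by linear_combination z₁ * h₁
  have t₂ : z₁ * z₂ * z₃ = 2 * z₂ ^ 2 := by linear_combination z₂ * h₂
  have t₃ : z₁ * z₂ * z₃ = 2 * z₃ ^ 2 := by linear_combination z₃ * h₃
  have sq₁ : z₁ ^ 2 = -c := mul_left_cancel₀ h2 (by linear_combination -2 * heq + t₂ + t₃)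
  have sq₂ : z₂ ^ 2 = -c := mul_left_cancel₀ h2 (by linear_combination -2 * heq + t₁ + t₃)
  have sq₃ : z₃ ^ 2 = -c := mul_left_cancel₀ h2 (by linear_combination -2 * heq + t₁ + t₂)
  have prod : z₁ * z₂ * z₃ = -2 * c := by linear_combination t₁ + 2 * sq₁
  linear_combination -(z₁ * z₂ * z₃ - 2 * c) * prod + z₂ ^ 2 * z₃ ^ 2 * sq₁ - c * z₃ ^ 2 * sq₂
    + c ^ 2 * sq₃

/-- For `n ≥ 2`, the hypersurface `{z₁z₂z₃ − z₄ⁿ = z₁² + z₂² + z₃² + 1}` is smooth: at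
each of its points at least one of the partial derivatives `z₂z₃ − 2z₁`, `z₁z₃ − 2z₂`,
`z₁z₂ − 2z₃`, `n z₄^{n−1}` is nonzero. -/
theorem stmt15 (n : ℕ) (hn : 2 ≤ n) :
    ∀ z₁ z₂ z₃ z₄ : ℂ,
      z₁ * z₂ * z₃ - z₄ ^ n = z₁ ^ 2 + z₂ ^ 2 + z₃ ^ 2 + 1 →
        (z₂ * z₃ - 2 * z₁ ≠ 0 ∨ z₁ * z₃ - 2 * z₂ ≠ 0 ∨ z₁ * z₂ - 2 * z₃ ≠ 0 ∨
          (n : ℂ) * z₄ ^ (n - 1) ≠ 0) := by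
  intro z₁ z₂ z₃ z₄ heq
  by_contra! ⟨h₁, h₂, h₃, h₄⟩
  have hz₄ : z₄ = 0 := by
    rw [mul_eq_zero, Nat.cast_eq_zero, pow_eq_zero_iff (by omega)] at h₄
    exact h₄.resolve_left (by omega)
  rw [hz₄, zero_pow (by omega), sub_zero] at heq
  have := sq_mul_add_four_eq_zero_of_singular_cubic two_ne_zero heq h₁ h₂ h₃
  norm_num at this
end

section
/- Let n ≥ 2 be an integer. The affine hypersurface {(z₁,z₂,z₃,z₄) ∈ ℂ⁴ : z₁z₂z₃ − z₄ⁿ = z₁ + z₂ + z₃} is smooth: at every point of it, at least one of the four partial derivatives z₂z₃ − 1, z₁z₃ − 1, z₁z₂ − 1, n z₄^{n−1} of the defining polynomial z₁z₂z₃ − z₄ⁿ − z₁ − z₂ − z₃ is nonzero. -/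
/-!
Where the partial derivatives in `z₁, z₂, z₃` vanish, `z₁ = z₂ = z₃ = w` with `w² = 1`, so
`z₁z₂z₃ − (z₁ + z₂ + z₃) = w − 3w = −2w ≠ 0`. Where the partial in `z₄` vanishes, `z₄ = 0`,
so the equation of the hypersurface forces that same expression to equal `z₄ⁿ = 0`.
-/

theorem eq_and_eq_of_mul_eq_one {M : Type*} [CommMonoid M] {a b c : M}
    (hbc : b * c = 1) (hac : a * c = 1) (hab : a * b = 1) : a = b ∧ b = c :=
  ⟨left_inv_eq_right_inv hac (by rw [mul_comm, hbc]),
    left_inv_eq_right_inv (by rw [mul_comm, hab]) hac⟩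

theorem mul_mul_sub_add_add_eq_neg_two_mul {R : Type*} [CommRing R] {a b c : R}
    (hbc : b * c = 1) (hac : a * c = 1) (hab : a * b = 1) :
    a * b * c - (a + b + c) = -2 * a := by
  obtain ⟨rfl, rfl⟩ := eq_and_eq_of_mul_eq_one hbc hac hab
  linear_combination a * hab

/-- For `n ≥ 2`, the hypersurface `{z₁z₂z₃ − z₄ⁿ = z₁ + z₂ + z₃}` is smooth: at each of
its points at least one of the partial derivatives `z₂z₃ − 1`, `z₁z₃ − 1`, `z₁z₂ − 1`,
`n z₄^{n−1}` is nonzero. -/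
theorem stmt16 (n : ℕ) (hn : 2 ≤ n) :
    ∀ z₁ z₂ z₃ z₄ : ℂ,
      z₁ * z₂ * z₃ - z₄ ^ n = z₁ + z₂ + z₃ →
        (z₂ * z₃ - 1 ≠ 0 ∨ z₁ * z₃ - 1 ≠ 0 ∨ z₁ * z₂ - 1 ≠ 0 ∨
          (n : ℂ) * z₄ ^ (n - 1) ≠ 0) := by
  intro z₁ z₂ z₃ z₄ hz
  by_contra! ⟨h₂₃, h₁₃, h₁₂, h₄⟩
  have hn₀ : (n : ℂ) ≠ 0 := by exact_mod_cast (by omega : n ≠ 0)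
  have hz₄ : z₄ = 0 := eq_zero_of_pow_eq_zero ((mul_eq_zero.mp h₄).resolve_left hn₀)
  have hvalue := mul_mul_sub_add_add_eq_neg_two_mul
    (sub_eq_zero.mp h₂₃) (sub_eq_zero.mp h₁₃) (sub_eq_zero.mp h₁₂)
  have hz₁ : z₁ = 0 := by
    rw [hz₄, zero_pow (by omega)] at hz
    linear_combination (1 / 2 : ℂ) * hvalue - (1 / 2 : ℂ) * hz
  simp [hz₁] at h₁₂
end

section
/- Define ψ : ℂ³ → ℂ⁵ by ψ(x₁,x₂,x₃) = (x₁², x₂⁴, x₃⁴, x₁x₂x₃, x₂²x₃²). Then the image of ψ is exactly the complete intersection {(z₁,z₂,z₃,z₄,z₅) ∈ ℂ⁵ : z₁z₅ = z₄² and z₂z₃ = z₅²}. -/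
/-- The image of `ψ(x₁,x₂,x₃) = (x₁², x₂⁴, x₃⁴, x₁x₂x₃, x₂²x₃²)` is exactly the complete
intersection `{z₁z₅ = z₄², z₂z₃ = z₅²} ⊂ ℂ⁵`. -/
theorem stmt17 :
    Set.range (fun x : ℂ × ℂ × ℂ =>
        (x.1 ^ 2, x.2.1 ^ 4, x.2.2 ^ 4, x.1 * x.2.1 * x.2.2, x.2.1 ^ 2 * x.2.2 ^ 2)) =
      {z : ℂ × ℂ × ℂ × ℂ × ℂ |
        z.1 * z.2.2.2.2 = z.2.2.2.1 ^ 2 ∧ z.2.1 * z.2.2.1 = z.2.2.2.2 ^ 2} := by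
  ext z
  obtain ⟨z1, z2, z3, z4, z5⟩ := z
  simp only [Set.mem_range, Set.mem_setOf_eq, Prod.mk.injEq]
  constructor
  · rintro ⟨⟨a, b, c⟩, h1, h2, h3, h4, h5⟩
    subst h1 h2 h3 h4 h5
    constructor <;> ring
  · rintro ⟨h1, h2⟩
    obtain ⟨b, hb⟩ := Complex.isAlgClosed.exists_pow_nat_eq z2 (n := 4) (by norm_num)
    obtain ⟨c0, hc0⟩ := Complex.isAlgClosed.exists_pow_nat_eq z3 (n := 4) (by norm_num)
    -- arrange b^2*c^2 = z5
    obtain ⟨c, hc, hbc⟩ : ∃ c : ℂ, c ^ 4 = z3 ∧ b ^ 2 * c ^ 2 = z5 := by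
      have hsq : (b ^ 2 * c0 ^ 2 - z5) * (b ^ 2 * c0 ^ 2 + z5) = 0 := by
        have h : (b ^ 2 * c0 ^ 2) ^ 2 = z5 ^ 2 := by rw [← h2, ← hb, ← hc0]; ring
        linear_combination h
      rcases mul_eq_zero.mp hsq with h | h
      · exact ⟨c0, hc0, sub_eq_zero.mp h⟩
      · exact ⟨Complex.I * c0, by rw [mul_pow, Complex.I_pow_four, one_mul, hc0],
          by rw [mul_pow, Complex.I_sq]; linear_combination -h⟩
    by_cases h5 : z5 = 0
    · -- degenerate case: z4 = 0 and b*c = 0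
      have hz4 : z4 = 0 := by
        have : z4 ^ 2 = 0 := by rw [← h1, h5, mul_zero]
        exact pow_eq_zero_iff (by norm_num) |>.mp this
      have hbc0 : b * c = 0 := by
        have : (b * c) ^ 2 = 0 := by rw [h5] at hbc; linear_combination hbc
        exact pow_eq_zero_iff (by norm_num) |>.mp this
      obtain ⟨a, ha⟩ := Complex.isAlgClosed.exists_pow_nat_eq z1 (n := 2) (by norm_num)
      refine ⟨⟨a, b, c⟩, ha, hb, hc, ?_, hbc⟩
      rw [mul_assoc, hbc0, mul_zero, hz4]
    · have hbcne : b * c ≠ 0 := by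
        intro h
        apply h5
        rw [← hbc]
        linear_combination (b * c) * h
      refine ⟨⟨z4 / (b * c), b, c⟩, ?_, hb, hc, ?_, hbc⟩
      · field_simp [left_ne_zero_of_mul hbcne, right_ne_zero_of_mul hbcne]
        linear_combination -h1 - z1 * hbc
      · field_simp [left_ne_zero_of_mul hbcne, right_ne_zero_of_mul hbcne]
end

section
/- The set of points (z₁,z₂,z₃,z₄,z₅) ∈ ℂ⁵ satisfying z₁z₅ = z₄² and z₂z₃ = z₅² at which the two gradient vectors (z₅, 0, 0, −2z₄, z₁) and (0, z₃, z₂, 0, −2z₅) are linearly dependent over ℂ is exactly the union of the three coordinate axes L₁ = {(z₁,0,0,0,0) : z₁ ∈ ℂ}, L₂ = {(0,z₂,0,0,0) : z₂ ∈ ℂ}, L₃ = {(0,0,z₃,0,0) : z₃ ∈ ℂ}. -/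
/-! If `a • ∇P₁ + b • ∇P₂ = 0` with `a ≠ 0`, the first coordinate forces `z₅ = 0`, hence
`z₄ = 0` by `z₁z₅ = z₄²`, then `z₁ = 0` from the last coordinate and `z₂z₃ = 0`. If `a = 0`
then `b ≠ 0` kills `z₂` and `z₃`, hence `z₅` by `z₂z₃ = z₅²` and `z₄` as before. No division
by `2` occurs, so the computation works over any integral domain. -/

section

variable {R : Type*} [CommRing R] [IsDomain R] {z₁ z₂ z₃ z₄ z₅ a b : R}

lemma on_axis_of_gradients_dependent (h₁ : z₁ * z₅ = z₄ ^ 2) (h₂ : z₂ * z₃ = z₅ ^ 2)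
    (hab : (a, b) ≠ (0, 0)) (e₁ : a * z₅ = 0) (e₂ : b * z₃ = 0) (e₃ : b * z₂ = 0)
    (e₅ : a * z₁ + b * (-2 * z₅) = 0) :
    (z₂ = 0 ∧ z₃ = 0 ∨ z₁ = 0 ∧ z₃ = 0 ∨ z₁ = 0 ∧ z₂ = 0) ∧ z₄ = 0 ∧ z₅ = 0 := by
  have hz₄ : z₅ = 0 → z₄ = 0 := fun hz₅ ↦ pow_eq_zero_iff two_ne_zero |>.mp <| by
    rw [← h₁, hz₅, mul_zero]
  rcases eq_or_ne a 0 with rfl | ha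
  · have hb : b ≠ 0 := by rintro rfl; exact hab rfl
    have hz₂ : z₂ = 0 := (mul_eq_zero.mp e₃).resolve_left hb
    have hz₃ : z₃ = 0 := (mul_eq_zero.mp e₂).resolve_left hb
    have hz₅ : z₅ = 0 := pow_eq_zero_iff two_ne_zero |>.mp <| by rw [← h₂, hz₂, zero_mul]
    exact ⟨.inl ⟨hz₂, hz₃⟩, hz₄ hz₅, hz₅⟩
  · have hz₅ : z₅ = 0 := (mul_eq_zero.mp e₁).resolve_left ha
    have hz₁ : z₁ = 0 := (mul_eq_zero.mp (by simpa [hz₅] using e₅)).resolve_left ha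
    rw [hz₅, zero_pow two_ne_zero, mul_eq_zero] at h₂
    refine ⟨.inr ?_, hz₄ hz₅, hz₅⟩
    rcases h₂ with hz₂ | hz₃
    exacts [.inr ⟨hz₁, hz₂⟩, .inl ⟨hz₁, hz₃⟩]

end

theorem setOf_gradients_dependent_eq_axes (R : Type*) [CommRing R] [IsDomain R] :
    {z : R × R × R × R × R |
        z.1 * z.2.2.2.2 = z.2.2.2.1 ^ 2 ∧ z.2.1 * z.2.2.1 = z.2.2.2.2 ^ 2 ∧
        ∃ a b : R, (a, b) ≠ (0, 0) ∧
          a • ((z.2.2.2.2, 0, 0, -2 * z.2.2.2.1, z.1) : R × R × R × R × R) +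
              b • ((0, z.2.2.1, z.2.1, 0, -2 * z.2.2.2.2) : R × R × R × R × R) = 0} =
      {z : R × R × R × R × R | ∃ a : R, z = (a, 0, 0, 0, 0)} ∪
        {z : R × R × R × R × R | ∃ a : R, z = (0, a, 0, 0, 0)} ∪
        {z : R × R × R × R × R | ∃ a : R, z = (0, 0, a, 0, 0)} := by
  ext ⟨z₁, z₂, z₃, z₄, z₅⟩
  simp only [Set.mem_ofPred_eq, Set.mem_union, Prod.smul_mk, Prod.mk_add_mk, smul_eq_mul,
    Prod.mk_eq_zero, Prod.mk.injEq, mul_zero, add_zero, zero_add, exists_and_left, exists_eq_left']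
  constructor
  · rintro ⟨h₁, h₂, a, b, hab, e₁, e₂, e₃, -, e₅⟩
    obtain ⟨⟨hz₂, hz₃⟩ | ⟨hz₁, hz₃⟩ | ⟨hz₁, hz₂⟩, hz₄, hz₅⟩ :=
      on_axis_of_gradients_dependent h₁ h₂ hab e₁ e₂ e₃ e₅
    exacts [.inl (.inl ⟨hz₂, hz₃, hz₄, hz₅⟩), .inl (.inr ⟨hz₁, hz₃, hz₄, hz₅⟩),
      .inr ⟨hz₁, hz₂, hz₄, hz₅⟩]
  · rintro ((⟨rfl, rfl, rfl, rfl⟩ | ⟨rfl, rfl, rfl, rfl⟩) | ⟨rfl, rfl, rfl, rfl⟩)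
    -- `∇P₂` vanishes on the first axis, `∇P₁` on the other two.
    · exact ⟨by ring, by ring, 0, 1, by simp, by simp⟩
    all_goals exact ⟨by ring, by ring, 1, 0, by simp, by simp⟩

/-- The set of points of the complete intersection `{z₁z₅ = z₄², z₂z₃ = z₅²} ⊂ ℂ⁵`
where the gradients `(z₅,0,0,−2z₄,z₁)` and `(0,z₃,z₂,0,−2z₅)` of the defining
polynomials are linearly dependent over `ℂ` is exactly the union of the three
coordinate axes `L₁, L₂, L₃`. -/
theorem stmt18 :
    {z : ℂ × ℂ × ℂ × ℂ × ℂ |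
        z.1 * z.2.2.2.2 = z.2.2.2.1 ^ 2 ∧ z.2.1 * z.2.2.1 = z.2.2.2.2 ^ 2 ∧
        ∃ a b : ℂ, (a, b) ≠ (0, 0) ∧
          a • ((z.2.2.2.2, 0, 0, -2 * z.2.2.2.1, z.1) : ℂ × ℂ × ℂ × ℂ × ℂ) +
              b • ((0, z.2.2.1, z.2.1, 0, -2 * z.2.2.2.2) : ℂ × ℂ × ℂ × ℂ × ℂ) = 0} =
      {z : ℂ × ℂ × ℂ × ℂ × ℂ | ∃ a : ℂ, z = (a, 0, 0, 0, 0)} ∪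
        {z : ℂ × ℂ × ℂ × ℂ × ℂ | ∃ a : ℂ, z = (0, a, 0, 0, 0)} ∪
        {z : ℂ × ℂ × ℂ × ℂ × ℂ | ∃ a : ℂ, z = (0, 0, a, 0, 0)} :=
  setOf_gradients_dependent_eq_axes ℂ
end

section
/- At every point (z₁,z₂,z₃,z₄,z₅) ∈ ℂ⁵ of the complete intersection {z₁z₅ − z₄² = z₂ + z₃ and z₂z₃ − z₅² = z₁³ + 1}, the two gradient vectors (z₅, −1, −1, −2z₄, z₁) and (−3z₁², z₃, z₂, 0, −2z₅) of the defining polynomials are linearly independent over ℂ; in particular, this complete intersection is a smooth affine variety of dimension 3. -/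
/-!
The gradient `∇f₁ = (z₅, -1, -1, -2z₄, z₁)` never vanishes, so a linear dependence would make
`∇f₂ = c • ∇f₁` for some scalar `c`. Comparing coordinates gives `z₂ = z₃ = -c`, `c z₄ = 0`,
`c z₅ = -3z₁²` and `c z₁ = -2z₅`. For `c = 0` this forces `z₁ = z₂ = z₃ = z₅ = 0`, which violates
the second equation. For `c ≠ 0`, the first equation turns `c z₁ = -2z₅` into `z₁² = 4`, and then
the second equation into `z₁³ = -1`; these are incompatible, since together they force `63 = 0`.
-/

section

variable {K : Type*} [Field K] [CharZero K]

theorem sq_ne_four_of_pow_three_eq_neg_one {z : K} (h : z ^ 3 = -1) : z ^ 2 ≠ 4 := by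
  intro hsq
  have : (63 : K) = 0 := by
    linear_combination (4 * z - 1) * h - ((4 * z - 1) * z + 16) * hsq
  norm_num at this

variable {z₁ z₂ z₃ z₄ z₅ : K}

theorem smul_gradient_ne_gradient (h₁ : z₁ * z₅ - z₄ ^ 2 = z₂ + z₃)
    (h₂ : z₂ * z₃ - z₅ ^ 2 = z₁ ^ 3 + 1) (c : K) :
    c • ((z₅, -1, -1, -2 * z₄, z₁) : K × K × K × K × K) ≠ (-3 * z₁ ^ 2, z₃, z₂, 0, -2 * z₅) := by
  intro h
  obtain ⟨e₁, e₃, e₂, e₄, e₅⟩ : c * z₅ = -3 * z₁ ^ 2 ∧ -c = z₃ ∧ -c = z₂ ∧ c * (-2 * z₄) = 0 ∧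
      c * z₁ = -2 * z₅ := by
    simpa only [Prod.smul_mk, smul_eq_mul, Prod.mk.injEq, mul_neg, mul_one] using h
  rcases eq_or_ne c 0 with rfl | hc
  · have hz₁ : z₁ = 0 := by simpa using e₁.symm
    have hz₅ : z₅ = 0 := by simpa [hz₁] using e₅.symm
    simp [← e₂, ← e₃, hz₁, hz₅] at h₂
  · have hz₄ : z₄ = 0 := by simpa [hc] using e₄
    have hsq : z₁ ^ 2 = 4 := mul_left_cancel₀ hc <| by
      linear_combination z₁ * e₅ - 2 * h₁ + 2 * e₂ + 2 * e₃ - 2 * z₄ * hz₄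
    have hcube : z₁ ^ 3 = -1 := by
      linear_combination -h₂ - z₂ * e₃ + c * e₂ - (2 * z₅ - c * z₁) / 4 * e₅ - c ^ 2 / 4 * hsq
    exact sq_ne_four_of_pow_three_eq_neg_one hcube hsq

end

/-- At every point of the complete intersection
`{z₁z₅ − z₄² = z₂ + z₃, z₂z₃ − z₅² = z₁³ + 1} ⊂ ℂ⁵`, the gradients
`(z₅,−1,−1,−2z₄,z₁)` and `(−3z₁²,z₃,z₂,0,−2z₅)` of the defining polynomials are
linearly independent over `ℂ`. -/
theorem stmt19 :
    ∀ z₁ z₂ z₃ z₄ z₅ : ℂ,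
      z₁ * z₅ - z₄ ^ 2 = z₂ + z₃ →
      z₂ * z₃ - z₅ ^ 2 = z₁ ^ 3 + 1 →
      ∀ a b : ℂ,
        a • ((z₅, -1, -1, -2 * z₄, z₁) : ℂ × ℂ × ℂ × ℂ × ℂ) +
            b • ((-3 * z₁ ^ 2, z₃, z₂, 0, -2 * z₅) : ℂ × ℂ × ℂ × ℂ × ℂ) = 0 →
          a = 0 ∧ b = 0 := by
  intro z₁ z₂ z₃ z₄ z₅ h₁ h₂
  have hne : ((z₅, -1, -1, -2 * z₄, z₁) : ℂ × ℂ × ℂ × ℂ × ℂ) ≠ 0 := by simp [Prod.ext_iff]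
  have hli := (LinearIndependent.pair_iff' hne).mpr (smul_gradient_ne_gradient h₁ h₂)
  exact LinearIndependent.pair_iff.mp hli
end
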